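/- arXiv:2203.05364 — 4 statements merged into one kernel-verified Lean document; each statement's English description precedes it below -/
import Mathlib

section
/- Let E_μ be a uv-external upward planar embedding of a digraph G_μ whose only sources among non-pole vertices number σ_μ. Then the left-turn-number and the right-turn-number of E_μ both lie in the interval [−2σ_μ − 1, 2σ_μ + 1]. -/
open Finset

/-- Key counting lemma: if all values are in {-1,0,1}, every 1 is at a source
or a sink, and between two consecutive sink-1's there is a -1, then the sum of
the first `n` values is at most twice the number of sources plus one. -/
lemma stmt8_key (a : ℕ → ℤ) (src snk : ℕ → Bool)
    (hval : ∀ i, a i = -1 ∨ a i = 0 ∨ a i = 1)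
    (hsw : ∀ i, a i = 1 → src i = true ∨ snk i = true)
    (hsm : ∀ i j : ℕ, i < j → snk i = true → snk j = true → a i = 1 → a j = 1 →
      (∀ l, i < l → l < j → a l ≠ 1) → ∃ l, i < l ∧ l < j ∧ a l = -1)
    (n : ℕ) :
    (∑ i ∈ Finset.range n, a i) ≤
      2 * (((Finset.range n).filter (fun i => src i = true)).card : ℤ) + 1 := by
  have main : ∀ m : ℕ,
      ((¬ ∃ i, i < m ∧ a i = 1 ∧ snk i = true ∧
          ∀ l, i < l → l < m → a l ≠ 1 ∧ a l ≠ -1) →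
        (∑ i ∈ Finset.range m, a i) ≤
          2 * (((Finset.range m).filter (fun i => src i = true)).card : ℤ)) ∧
      (∑ i ∈ Finset.range m, a i) ≤
        2 * (((Finset.range m).filter (fun i => src i = true)).card : ℤ) + 1 := by
    intro m
    induction m with
    | zero => simp
    | succ m ih =>
      obtain ⟨ih0, ih1⟩ := ih
      have hs : (∑ i ∈ Finset.range (m+1), a i) = (∑ i ∈ Finset.range m, a i) + a m :=
        Finset.sum_range_succ _ _
      have hcard : (((Finset.range (m+1)).filter (fun i => src i = true)).card : ℤ) =
          (((Finset.range m).filter (fun i => src i = true)).card : ℤ) +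
            (if src m = true then 1 else 0) := by
        rw [Finset.range_add_one, Finset.filter_insert]
        split
        · rw [Finset.card_insert_of_notMem (by simp)]
          push_cast; ring
        · simp
      have hmono : (((Finset.range m).filter (fun i => src i = true)).card : ℤ) ≤
          (((Finset.range (m+1)).filter (fun i => src i = true)).card : ℤ) := by
        rw [hcard]; split <;> omega
      rcases hval m with hm | hm | hm
      · -- a m = -1
        refine ⟨fun _ => ?_, ?_⟩ <;> rw [hs, hm] <;> linarith
      · -- a m = 0
        constructor
        · intro hQ
          have hQ' : ¬ ∃ i, i < m ∧ a i = 1 ∧ snk i = true ∧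
              ∀ l, i < l → l < m → a l ≠ 1 ∧ a l ≠ -1 := by
            rintro ⟨i, hi, h1, h2, h3⟩
            refine hQ ⟨i, Nat.lt_succ_of_lt hi, h1, h2, fun l hl hlm => ?_⟩
            rcases Nat.lt_or_ge l m with hlt | hge
            · exact h3 l hl hlt
            · have : l = m := by omega
              subst this
              constructor <;> rw [hm] <;> decide
          rw [hs, hm]
          linarith [ih0 hQ']
        · rw [hs, hm]; linarith
      · -- a m = 1
        rcases hsw m hm with hsrc | hsnk
        · -- source
          have hc : (((Finset.range (m+1)).filter (fun i => src i = true)).card : ℤ) =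
              (((Finset.range m).filter (fun i => src i = true)).card : ℤ) + 1 := by
            rw [hcard, if_pos hsrc]
          refine ⟨fun _ => ?_, ?_⟩ <;> rw [hs, hm, hc] <;> linarith
        · -- sink
          have hQm : ¬ ∃ i, i < m ∧ a i = 1 ∧ snk i = true ∧
              ∀ l, i < l → l < m → a l ≠ 1 ∧ a l ≠ -1 := by
            rintro ⟨i, hi, h1, h2, h3⟩
            obtain ⟨l, hl1, hl2, hl3⟩ :=
              hsm i m hi h2 hsnk h1 hm (fun l hl hlm => (h3 l hl hlm).1)
            exact (h3 l hl1 hl2).2 hl3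
          have hbase := ih0 hQm
          constructor
          · intro hQ
            exact absurd ⟨m, Nat.lt_succ_self m, hm, hsnk,
              fun l hl1 hl2 => absurd (by omega : l < l) (lt_irrefl l)⟩ hQ
          · rw [hs, hm]; linarith
  linarith [(main n).2]


lemma stmt8_bridge (k σ : ℕ) (α : Fin (k + 1) → ℤ) (sourceL sinkL : Fin (k + 1) → Bool)
    (hαval : ∀ i, α i = -1 ∨ α i = 0 ∨ α i = 1)
    (hLswitch : ∀ i, α i = 1 → sourceL i = true ∨ sinkL i = true)
    (hsrcL : ((Finset.univ.filter
        (fun i : Fin (k + 1) => i ≠ 0 ∧ i ≠ Fin.last k ∧ sourceL i = true)).card : ℤ) ≤ σ)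
    (hsmallL : ∀ i j : Fin (k + 1), i < j → sinkL i = true → sinkL j = true →
        α i = 1 → α j = 1 → (∀ l, i < l → l < j → α l ≠ 1) →
        ∃ l, i < l ∧ l < j ∧ α l = -1) :
    (∑ i ∈ Finset.univ.filter (fun i : Fin (k + 1) => i ≠ 0 ∧ i ≠ Fin.last k), α i)
      ≤ 2 * (σ : ℤ) + 1 := by
  classical
  set a : ℕ → ℤ := fun i =>
    if h : i < k + 1 then (if i ≠ 0 ∧ i ≠ k then α ⟨i, h⟩ else 0) else 0 with ha
  set src : ℕ → Bool := fun i =>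
    if h : i < k + 1 then (decide (i ≠ 0 ∧ i ≠ k) && sourceL ⟨i, h⟩) else false with hsrc
  set snk : ℕ → Bool := fun i =>
    if h : i < k + 1 then (decide (i ≠ 0 ∧ i ≠ k) && sinkL ⟨i, h⟩) else false with hsnk
  -- basic facts
  have ha_one : ∀ i, a i = 1 → ∃ h : i < k + 1, i ≠ 0 ∧ i ≠ k ∧ α ⟨i, h⟩ = 1 := by
    intro i hi
    by_cases h : i < k + 1
    · refine ⟨h, ?_⟩
      by_cases h2 : i ≠ 0 ∧ i ≠ k
      · simp only [ha, dif_pos h, if_pos h2] at hi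
        exact ⟨h2.1, h2.2, hi⟩
      · simp only [ha, dif_pos h, if_neg h2] at hi; norm_num at hi
    · simp only [ha, dif_neg h] at hi; norm_num at hi
  have hsnk_true : ∀ i, snk i = true → ∃ h : i < k + 1, i ≠ 0 ∧ i ≠ k ∧ sinkL ⟨i, h⟩ = true := by
    intro i hi
    by_cases h : i < k + 1
    · simp only [hsnk, dif_pos h, Bool.and_eq_true, decide_eq_true_eq] at hi
      exact ⟨h, hi.1.1, hi.1.2, hi.2⟩
    · simp only [hsnk, dif_neg h] at hi; exact absurd hi (by simp)
  have ha_int : ∀ (i : ℕ) (h : i < k + 1), i ≠ 0 → i ≠ k → a i = α ⟨i, h⟩ := by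
    intro i h h0 hk
    simp only [ha, dif_pos h]
    exact if_pos ⟨h0, hk⟩
  have hval : ∀ i, a i = -1 ∨ a i = 0 ∨ a i = 1 := by
    intro i
    by_cases h : i < k + 1
    · by_cases h2 : i ≠ 0 ∧ i ≠ k
      · simp only [ha, dif_pos h, if_pos h2]; exact hαval _
      · simp only [ha, dif_pos h, if_neg h2]; tauto
    · simp only [ha, dif_neg h]; tauto
  have hsw : ∀ i, a i = 1 → src i = true ∨ snk i = true := by
    intro i hi
    obtain ⟨h, h0, hk, hα⟩ := ha_one i hi
    rcases hLswitch _ hα with hc | hc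
    · left; simp only [hsrc, dif_pos h, Bool.and_eq_true, decide_eq_true_eq]
      exact ⟨⟨h0, hk⟩, hc⟩
    · right; simp only [hsnk, dif_pos h, Bool.and_eq_true, decide_eq_true_eq]
      exact ⟨⟨h0, hk⟩, hc⟩
  have hsm : ∀ i j : ℕ, i < j → snk i = true → snk j = true → a i = 1 → a j = 1 →
      (∀ l, i < l → l < j → a l ≠ 1) → ∃ l, i < l ∧ l < j ∧ a l = -1 := by
    intro i j hij hsi hsj hai haj hno
    obtain ⟨hi, hi0, hik, hsinki⟩ := hsnk_true i hsi
    obtain ⟨hj, hj0, hjk, hsinkj⟩ := hsnk_true j hsj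
    have hαi : α ⟨i, hi⟩ = 1 := by rw [← ha_int i hi hi0 hik]; exact hai
    have hαj : α ⟨j, hj⟩ = 1 := by rw [← ha_int j hj hj0 hjk]; exact haj
    have hjltk : j < k := by omega
    obtain ⟨l, hl1, hl2, hl3⟩ := hsmallL ⟨i, hi⟩ ⟨j, hj⟩ hij hsinki hsinkj hαi hαj
      (by
        intro l h1 h2
        have hli : i < (l : ℕ) := h1
        have hlj : (l : ℕ) < j := h2
        have heq : a (l : ℕ) = α l := by
          rw [ha_int l l.isLt (by omega) (by omega), Fin.eta]
        rw [← heq]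
        exact hno l hli hlj)
    refine ⟨(l : ℕ), hl1, hl2, ?_⟩
    have hli : i < (l : ℕ) := hl1
    have hlj : (l : ℕ) < j := hl2
    have heq : a (l : ℕ) = α l := by
      rw [ha_int l l.isLt (by omega) (by omega), Fin.eta]
    rw [heq]
    exact hl3
  have hkey := stmt8_key a src snk hval hsw hsm (k + 1)
  -- sum conversion
  have hsum : (∑ i ∈ Finset.range (k + 1), a i) =
      ∑ i ∈ Finset.univ.filter (fun i : Fin (k + 1) => i ≠ 0 ∧ i ≠ Fin.last k), α i := by
    rw [← Fin.sum_univ_eq_sum_range, Finset.sum_filter]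
    refine Finset.sum_congr rfl (fun i _ => ?_)
    have hiff : ((i : ℕ) ≠ 0 ∧ (i : ℕ) ≠ k) ↔ (i ≠ 0 ∧ i ≠ Fin.last k) := by
      constructor
      · rintro ⟨h0, hk⟩
        exact ⟨fun he => h0 (by simp [he]), fun he => hk (by simp [he])⟩
      · rintro ⟨h0, hk⟩
        exact ⟨fun he => h0 (Fin.ext he), fun he => hk (Fin.ext (by simp [he]))⟩
    simp only [ha, dif_pos i.isLt, Fin.eta]
    exact if_congr hiff rfl rfl
  -- card conversion
  have hcard : ((Finset.range (k + 1)).filter (fun i => src i = true)).card =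
      (Finset.univ.filter
        (fun i : Fin (k + 1) => i ≠ 0 ∧ i ≠ Fin.last k ∧ sourceL i = true)).card := by
    rw [Finset.card_filter, Finset.card_filter,
      ← Fin.sum_univ_eq_sum_range (fun i => if src i = true then (1 : ℕ) else 0)]
    refine Finset.sum_congr rfl (fun i _ => ?_)
    have hiff : (src (i : ℕ) = true) ↔ (i ≠ 0 ∧ i ≠ Fin.last k ∧ sourceL i = true) := by
      simp only [hsrc, dif_pos i.isLt, Bool.and_eq_true, decide_eq_true_eq, Fin.eta]
      constructor
      · rintro ⟨⟨h0, hk⟩, hsl⟩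
        exact ⟨fun he => h0 (by simp [he]), fun he => hk (by simp [he]), hsl⟩
      · rintro ⟨h0, hk, hsl⟩
        exact ⟨⟨fun he => h0 (Fin.ext he), fun he => hk (Fin.ext (by simp [he]))⟩, hsl⟩
    exact if_congr hiff rfl rfl
  rw [hsum, hcard] at hkey
  linarith

/-- Let `α` (resp. `β`) be the sequence of outer-face angle labels
along the left (resp. right) outer path of a uv-external upward planar
embedding of an acyclic digraph, with labels in {−1,0,1}, shared pole angles,
large angles occurring only at sources or sinks, at most `σ` sources among the
non-pole vertices of each path, the structural fact that between two
consecutive large sink angles there is a small angle, and UP3 for the outer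
face. Then the left-turn-number and the right-turn-number (the interior sums)
both lie in `[−2σ−1, 2σ+1]`. -/
theorem stmt_8 (k h σ : ℕ)
    (α : Fin (k + 1) → ℤ) (β : Fin (h + 1) → ℤ)
    (sourceL sinkL : Fin (k + 1) → Bool) (sourceR sinkR : Fin (h + 1) → Bool)
    (hαval : ∀ i, α i = -1 ∨ α i = 0 ∨ α i = 1)
    (hβval : ∀ j, β j = -1 ∨ β j = 0 ∨ β j = 1)
    (hpoleu : α 0 = β 0)
    (hpolev : α (Fin.last k) = β (Fin.last h))
    (hLswitch : ∀ i, α i = 1 → sourceL i = true ∨ sinkL i = true)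
    (hRswitch : ∀ j, β j = 1 → sourceR j = true ∨ sinkR j = true)
    (hsrcL : ((Finset.univ.filter
        (fun i : Fin (k + 1) => i ≠ 0 ∧ i ≠ Fin.last k ∧ sourceL i = true)).card : ℤ) ≤ σ)
    (hsrcR : ((Finset.univ.filter
        (fun j : Fin (h + 1) => j ≠ 0 ∧ j ≠ Fin.last h ∧ sourceR j = true)).card : ℤ) ≤ σ)
    (hsmallL : ∀ i j : Fin (k + 1), i < j → sinkL i = true → sinkL j = true →
        α i = 1 → α j = 1 → (∀ l, i < l → l < j → α l ≠ 1) →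
        ∃ l, i < l ∧ l < j ∧ α l = -1)
    (hsmallR : ∀ i j : Fin (h + 1), i < j → sinkR i = true → sinkR j = true →
        β i = 1 → β j = 1 → (∀ l, i < l → l < j → β l ≠ 1) →
        ∃ l, i < l ∧ l < j ∧ β l = -1)
    (hUP3 :
      (∑ i ∈ Finset.univ.filter (fun i : Fin (k + 1) => i ≠ 0 ∧ i ≠ Fin.last k), α i) +
      (∑ j ∈ Finset.univ.filter (fun j : Fin (h + 1) => j ≠ 0 ∧ j ≠ Fin.last h), β j) +
      α 0 + α (Fin.last k) = 2) :
    (-(2 * (σ : ℤ) + 1) ≤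
      ∑ i ∈ Finset.univ.filter (fun i : Fin (k + 1) => i ≠ 0 ∧ i ≠ Fin.last k), α i) ∧
    ((∑ i ∈ Finset.univ.filter (fun i : Fin (k + 1) => i ≠ 0 ∧ i ≠ Fin.last k), α i)
      ≤ 2 * (σ : ℤ) + 1) ∧
    (-(2 * (σ : ℤ) + 1) ≤
      ∑ j ∈ Finset.univ.filter (fun j : Fin (h + 1) => j ≠ 0 ∧ j ≠ Fin.last h), β j) ∧
    ((∑ j ∈ Finset.univ.filter (fun j : Fin (h + 1) => j ≠ 0 ∧ j ≠ Fin.last h), β j)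
      ≤ 2 * (σ : ℤ) + 1) := by
  have hA := stmt8_bridge k σ α sourceL sinkL hαval hLswitch hsrcL hsmallL
  have hB := stmt8_bridge h σ β sourceR sinkR hβval hRswitch hsrcR hsmallR
  have h0 := hαval 0
  have hlast := hαval (Fin.last k)
  have h0le : α 0 ≤ 1 := by rcases h0 with h | h | h <;> rw [h] <;> norm_num
  have hlastle : α (Fin.last k) ≤ 1 := by rcases hlast with h | h | h <;> rw [h] <;> norm_num
  exact ⟨by linarith, hA, by linarith, hB⟩
end

section
/- If a rooted forest F is a treedepth decomposition of a graph G of height d, then the forest F' obtained by replacing every vertex of F by an edge (i.e., a path of two vertices) is a treedepth decomposition of the expansion G' of G, and has height at most 2d. Consequently, td(G') ≤ 2·td(G). -/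
/-- A treedepth decomposition of height `d` of a graph with adjacency `adj`:
a forest-like ancestor relation `anc` (transitive, depth-increasing, with
linearly ordered ancestor sets) with depths `dpt` in `[1, d]`, such that
every edge joins an ancestor-descendant pair. -/
def IsTDDecomp {V : Type*} (adj : V → V → Prop) (anc : V → V → Prop)
    (dpt : V → ℕ) (d : ℕ) : Prop :=
  Transitive anc ∧
  (∀ x y, anc x y → dpt x < dpt y) ∧
  (∀ v, 1 ≤ dpt v ∧ dpt v ≤ d) ∧
  (∀ x y z, anc x z → anc y z → anc x y ∨ anc y x ∨ x = y) ∧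
  (∀ u v, adj u v → u = v ∨ anc u v ∨ anc v u)

/-- If a rooted forest (given by `anc`, `dpt`) is a treedepth
decomposition of height `d` of the underlying graph of a digraph `E`, then the
forest obtained by replacing every vertex by an edge (two stacked copies) is a
treedepth decomposition of the expansion `G'` (any graph on `V × Bool` whose
edges lie within a fiber or project to edges of `E`) of height at most `2d`.
Consequently `td(G') ≤ 2·td(G)`. -/
theorem stmt_11 {V : Type*} (E : V → V → Prop) (anc : V → V → Prop)
    (dpt : V → ℕ) (d : ℕ)
    (hF : IsTDDecomp (fun u v => E u v ∨ E v u) anc dpt d)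
    (adj' : V × Bool → V × Bool → Prop)
    (hexp : ∀ a b : V × Bool, adj' a b → a.1 = b.1 ∨ E a.1 b.1 ∨ E b.1 a.1) :
    IsTDDecomp adj'
      (fun a b => anc a.1 b.1 ∨ (a.1 = b.1 ∧ a.2 = false ∧ b.2 = true))
      (fun a => if a.2 then 2 * dpt a.1 else 2 * dpt a.1 - 1)
      (2 * d) ∧
    ∃ (anc' : V × Bool → V × Bool → Prop) (dpt' : V × Bool → ℕ),
      IsTDDecomp adj' anc' dpt' (2 * d) := by
  obtain ⟨htr, hdp, hbd, hlin, hcov⟩ := hF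
  have hsame : ∀ a b : V × Bool, a.1 = b.1 →
      a = b ∨ (anc a.1 b.1 ∨ (a.1 = b.1 ∧ a.2 = false ∧ b.2 = true)) ∨
        (anc b.1 a.1 ∨ (b.1 = a.1 ∧ b.2 = false ∧ a.2 = true)) := by
    rintro ⟨u, bu⟩ ⟨v, bv⟩ h
    dsimp at h; subst h
    cases bu <;> cases bv <;> simp
  have key : IsTDDecomp adj'
      (fun a b => anc a.1 b.1 ∨ (a.1 = b.1 ∧ a.2 = false ∧ b.2 = true))
      (fun a => if a.2 then 2 * dpt a.1 else 2 * dpt a.1 - 1) (2 * d) := by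
    refine ⟨?_, ?_, ?_, ?_, ?_⟩
    · rintro a b c (hab | ⟨h1, h2, h3⟩) (hbc | ⟨k1, k2, k3⟩)
      · exact Or.inl (htr hab hbc)
      · exact Or.inl (k1 ▸ hab)
      · exact Or.inl (by rw [h1]; exact hbc)
      · rw [h3] at k2; simp at k2
    · rintro a b (hab | ⟨h1, h2, h3⟩)
      · have h := hdp _ _ hab
        have h1 := (hbd a.1).1
        have h2 := (hbd b.1).1
        dsimp only
        cases a.2 <;> cases b.2 <;> simp <;> omega
      · dsimp only
        rw [h2, h3]; simp
        rw [h1]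
        have := (hbd b.1).1
        omega
    · intro a
      have := hbd a.1
      dsimp only
      cases a.2 <;> simp <;> omega
    · rintro a b c (hac | ⟨e1, e2, e3⟩) (hbc | ⟨f1, f2, f3⟩)
      · rcases hlin _ _ _ hac hbc with h | h | h
        · exact Or.inl (Or.inl h)
        · exact Or.inr (Or.inl (Or.inl h))
        · exact (hsame a b h).elim (fun h => Or.inr (Or.inr h))
            (fun h => h.elim Or.inl (fun h => Or.inr (Or.inl h)))
      · exact Or.inl (Or.inl (f1 ▸ hac))
      · exact Or.inr (Or.inl (Or.inl (e1 ▸ hbc)))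
      · have : a = b := Prod.ext (e1.trans f1.symm) (e2.trans f2.symm)
        exact Or.inr (Or.inr this)
    · rintro a b hab
      rcases hexp a b hab with h | h | h
      · exact (hsame a b h).elim Or.inl Or.inr
      · rcases hcov _ _ (Or.inl h) with heq | h' | h'
        · exact (hsame a b heq).elim Or.inl Or.inr
        · exact Or.inr (Or.inl (Or.inl h'))
        · exact Or.inr (Or.inr (Or.inl h'))
      · rcases hcov _ _ (Or.inr h) with heq | h' | h'
        · exact (hsame a b heq).elim Or.inl Or.inr
        · exact Or.inr (Or.inl (Or.inl h'))
        · exact Or.inr (Or.inr (Or.inl h'))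
  exact ⟨key, _, _, key⟩
end

section
/- The expansion of a digraph preserves the number of sources: each vertex of G that is not a source is replaced by vertices that are not sources, and each source of G is replaced by exactly two vertices of which exactly one is a source; hence G and its expansion G' have the same number of sources. -/
/-- A non-switch vertex of a digraph: one with both an incoming and an
outgoing edge. -/
def NonSwitch {V : Type*} (E : V → V → Prop) (v : V) : Prop :=
  (∃ u, E u v) ∧ (∃ w, E v w)

/-- The vertex set of the expansion of `E`: each non-switch vertex `v` is
replaced by two copies `(v, false) = v₁` and `(v, true) = v₂`; switch
vertices keep a single copy `(v, true)`. -/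
def ExpVert {V : Type*} (E : V → V → Prop) : Type _ :=
  {p : V × Bool // NonSwitch E p.1 ∨ p.2 = true}

/-- The edges of the expansion: the special edge `v₁ → v₂` for each
non-switch vertex `v`, and each edge `u → v` of `E` redirected from the
outgoing copy of `u` to the incoming copy of `v` (`v₁` if `v` is non-switch,
its unique copy otherwise). -/
def ExpAdj {V : Type*} (E : V → V → Prop) (a b : ExpVert E) : Prop :=
  (a.1.1 = b.1.1 ∧ NonSwitch E a.1.1 ∧ a.1.2 = false ∧ b.1.2 = true) ∨
  (E a.1.1 b.1.1 ∧ a.1.2 = true ∧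
    ((NonSwitch E b.1.1 ∧ b.1.2 = false) ∨ (¬ NonSwitch E b.1.1 ∧ b.1.2 = true)))

/-- Characterization of the sources of the expansion. -/
lemma source_char {V : Type*} (E : V → V → Prop) (a : ExpVert E) :
    (∀ b, ¬ ExpAdj E b a) ↔ (∀ u, ¬ E u a.1.1) ∧ a.1.2 = true := by
  constructor
  · intro h
    have ht : a.1.2 = true := by
      by_contra hf
      have hf' : a.1.2 = false := by
        simp only [Bool.not_eq_true] at hf; exact hf
      have hns : NonSwitch E a.1.1 := by
        rcases a.2 with h' | h'
        · exact h'
        · rw [hf'] at h'; exact absurd h' (by simp)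
      obtain ⟨u, hu⟩ := hns.1
      exact h ⟨(u, true), Or.inr rfl⟩ (Or.inr ⟨hu, rfl, Or.inl ⟨hns, hf'⟩⟩)
    refine ⟨?_, ht⟩
    intro u hu
    by_cases hns : NonSwitch E a.1.1
    · exact h ⟨(a.1.1, false), Or.inl hns⟩ (Or.inl ⟨rfl, hns, rfl, ht⟩)
    · exact h ⟨(u, true), Or.inr rfl⟩ (Or.inr ⟨hu, rfl, Or.inr ⟨hns, ht⟩⟩)
  · rintro ⟨hsrc, ht⟩ b hb
    rcases hb with ⟨heq, hns, _, _⟩ | ⟨he, _, _⟩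
    · rw [heq] at hns
      obtain ⟨u, hu⟩ := hns.1
      exact hsrc u hu
    · exact hsrc b.1.1 he

/-- The expansion of a digraph preserves the number of sources:
every copy of a non-source vertex is a non-source, every source is replaced by
vertices of which exactly one is a source, and hence `G` and its expansion
`G'` have the same number of sources. -/
theorem stmt_12 {V : Type*} [Fintype V] (E : V → V → Prop) :
    (∀ v : V, ¬ (∀ u, ¬ E u v) →
      ∀ a : ExpVert E, a.1.1 = v → ¬ (∀ b, ¬ ExpAdj E b a)) ∧
    (∀ v : V, (∀ u, ¬ E u v) →
      ∃! a : ExpVert E, a.1.1 = v ∧ (∀ b, ¬ ExpAdj E b a)) ∧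
    Set.ncard {v : V | ∀ u, ¬ E u v} =
      Set.ncard {a : ExpVert E | ∀ b, ¬ ExpAdj E b a} := by
  refine ⟨?_, ?_, ?_⟩
  · intro v hv a ha hsrc
    rw [source_char] at hsrc
    rw [ha] at hsrc
    exact hv hsrc.1
  · intro v hv
    refine ⟨⟨(v, true), Or.inr rfl⟩, ⟨rfl, ?_⟩, ?_⟩
    · apply (source_char E _).mpr; exact ⟨hv, rfl⟩
    · rintro b ⟨hb1, hb2⟩
      rw [source_char] at hb2
      apply Subtype.ext
      have : b.1 = (v, true) := Prod.ext hb1 hb2.2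
      simp [this]
  · have himg : {a : ExpVert E | ∀ b, ¬ ExpAdj E b a} =
        (fun v => (⟨(v, true), Or.inr rfl⟩ : ExpVert E)) '' {v : V | ∀ u, ¬ E u v} := by
      ext a
      simp only [Set.mem_setOf_eq, Set.mem_image]
      rw [source_char]
      constructor
      · rintro ⟨hsrc, ht⟩
        refine ⟨a.1.1, hsrc, ?_⟩
        apply Subtype.ext
        show (a.1.1, true) = a.1
        obtain ⟨⟨x, b⟩, hm⟩ := a
        simp only at ht ⊢
        rw [ht]
      · rintro ⟨u, hu, rfl⟩
        exact ⟨hu, rfl⟩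
    rw [himg]; refine (Set.ncard_image_of_injective (f := fun v => (⟨(v, true), Or.inr rfl⟩ : ExpVert E)) _ ?_).symm
    intro x y hxy
    have := congrArg (fun a : ExpVert E => a.1.1) hxy
    exact this
end

section
/- Let G be a connected acyclic digraph and B a biconnected component of G. Then B has at most as many sources as G. (More precisely: removing a leaf biconnected component B' ≠ B attached at a cut-vertex c yields a graph G' with at most as many sources as G, and the claim follows by induction on the number of biconnected components.) -/
/-- Let `E` be an acyclic digraph on a finite vertex set, and
suppose the vertex set is covered by `V₁ ∪ V₂` with `V₁ ∩ V₂ = {c}` (so `V₂`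
carries a leaf block `B'` attached at the cut-vertex `c`) and no edges between
`V₁ \ {c}` and `V₂ \ {c}`. Then the graph induced on `V₁` (obtained by
removing the block `B'`) has at most as many sources as the whole digraph;
by induction on the number of blocks, any biconnected component has at most
as many sources as `G`. -/
theorem stmt_13 {V : Type*} [Fintype V] (E : V → V → Prop)
    (hacyc : ∀ v, ¬ Relation.TransGen E v v)
    (V₁ V₂ : Set V) (c : V)
    (hcover : V₁ ∪ V₂ = Set.univ)
    (hinter : V₁ ∩ V₂ = {c})
    (hsep : ∀ u v : V, u ∈ V₁ → v ∈ V₂ → u ≠ c → v ≠ c → ¬ E u v ∧ ¬ E v u) :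
    Set.ncard {v ∈ V₁ | ∀ u ∈ V₁, ¬ E u v} ≤
      Set.ncard {v : V | ∀ u, ¬ E u v} := by
  classical
  set S' : Set V := {v ∈ V₁ | ∀ u ∈ V₁, ¬ E u v} with hS'
  set S : Set V := {v : V | ∀ u, ¬ E u v} with hS
  have hcV : c ∈ V₁ ∩ V₂ := by rw [hinter]; exact rfl
  have hcV₁ : c ∈ V₁ := hcV.1
  have hcV₂ : c ∈ V₂ := hcV.2
  -- a G'-source other than c is a G-source
  have key : ∀ v ∈ S', v ≠ c → v ∈ S := by
    rintro v ⟨hv1, hv2⟩ hvne u hE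
    rcases (by rw [hcover]; trivial : u ∈ V₁ ∪ V₂) with hu | hu
    · exact hv2 u hu hE
    · by_cases huc : u = c
      · exact hv2 u (huc ▸ hcV₁) hE
      · exact (hsep v u hv1 hu hvne huc).2 hE
  by_cases hc : c ∉ S' ∨ c ∈ S
  · have hsub : S' ⊆ S := by
      intro v hv
      by_cases hvc : v = c
      · rcases hc with h | h
        · exact absurd (hvc ▸ hv) h
        · exact hvc ▸ h
      · exact key v hv hvc
    exact Set.ncard_le_ncard hsub (Set.toFinite _)
  · push_neg at hc
    obtain ⟨hcS', hcS⟩ := hc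
    -- find a G-source s in V₂ \ {c}
    have hwf : WellFounded (Relation.TransGen E) := by
      have h1 : IsIrrefl V (Relation.TransGen E) := ⟨hacyc⟩
      have h2 : IsTrans V (Relation.TransGen E) := inferInstance
      exact Finite.wellFounded_of_trans_of_irrefl _
    set r : V → V → Prop := fun u v => E u v ∧ u ∈ V₂ with hr
    have hwfr : WellFounded r :=
      Subrelation.wf (fun h => Relation.TransGen.single h.1) hwf
    set A : Set V := {u | u ∈ V₂ ∧ Relation.ReflTransGen r u c} with hA
    -- c has a predecessor in V₂ since c ∉ S but c ∈ S'
    have hw : ∃ w, E w c ∧ w ∈ V₂ := by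
      simp only [hS, Set.mem_setOf_eq, not_forall, not_not] at hcS
      obtain ⟨w, hw⟩ := hcS
      refine ⟨w, hw, ?_⟩
      rcases (by rw [hcover]; trivial : w ∈ V₁ ∪ V₂) with h | h
      · exact absurd hw (hcS'.2 w h)
      · exact h
    obtain ⟨w, hwE, hwV₂⟩ := hw
    have hAne : A.Nonempty := ⟨w, hwV₂, Relation.ReflTransGen.single ⟨hwE, hwV₂⟩⟩
    obtain ⟨s, hsA, hsmin⟩ := hwfr.has_min A hAne
    have hsV₂ : s ∈ V₂ := hsA.1
    have hsc : s ≠ c := by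
      rintro rfl
      exact hsmin w ⟨hwV₂, Relation.ReflTransGen.single ⟨hwE, hwV₂⟩⟩ ⟨hwE, hwV₂⟩
    have hsS : s ∈ S := by
      intro u hE
      by_cases huV₂ : u ∈ V₂
      · exact hsmin u ⟨huV₂, Relation.ReflTransGen.head ⟨hE, huV₂⟩ hsA.2⟩ ⟨hE, huV₂⟩
      · have huV₁ : u ∈ V₁ := by
          rcases (by rw [hcover]; trivial : u ∈ V₁ ∪ V₂) with h | h
          · exact h
          · exact absurd h huV₂
        have huc : u ≠ c := fun h => huV₂ (h ▸ hcV₂)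
        exact (hsep u s huV₁ hsV₂ huc hsc).1 hE
    have hsV₁ : s ∉ V₁ := fun h => hsc (by
      have : s ∈ ({c} : Set V) := hinter ▸ ⟨h, hsV₂⟩
      exact this)
    -- now count
    have hsub : S' \ {c} ⊆ S \ {s} := by
      rintro v ⟨hv, hvc⟩
      exact ⟨key v hv hvc, fun h => hsV₁ ((Set.mem_singleton_iff.mp h) ▸ hv.1)⟩
    calc S'.ncard = (S' \ {c}).ncard + 1 :=
          (Set.ncard_diff_singleton_add_one hcS' (Set.toFinite _)).symm
      _ ≤ (S \ {s}).ncard + 1 := by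
          exact add_le_add_left (Set.ncard_le_ncard hsub (Set.toFinite _)) 1
      _ = S.ncard := Set.ncard_diff_singleton_add_one hsS (Set.toFinite _)
end
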